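/- arXiv:2309.14549 — 2 statements merged into one kernel-verified Lean document; each statement's English description precedes it below -/
import Mathlib

section
/- There is an absolute constant C such that for all positive integers y and l with l ∣ y and all real numbers i, j with 0 ≤ i ≤ j < y: | #{ c ∈ ℤ : i ≤ c ≤ j, l ∣ c, gcd(c/l, y/l) = 1 } − (φ(y/l)/y)·(j−i) | ≤ C·√(φ(y/l)). -/
/-!
Writing `c = l d`, the set counts the integers `d ∈ [i/l, j/l]` coprime to `m = y/l`. Möbius
inversion writes this count as `∑_{e ∣ m} μ(e) · #{multiples of e in the interval}`, and each of
these counts is `(j - i)/(l e)` up to an error at most `1`. As `∑_{e ∣ m} μ(e)/e = φ(m)/m`, the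
total error is at most `∑_{e ∣ m} |μ(e)| = 2^ω(m)`, and `4^ω(m) ≤ 16 ∏_{p ∣ m} (p - 1) ≤ 16 φ(m)`
because `p - 1 ≥ 4` for every prime `p ≥ 5`.
-/

open Finset ArithmeticFunction
open scoped Nat ArithmeticFunction.Moebius

lemma Int.Icc_ceil_floor_filter_dvd_eq {e : ℤ} (he : 0 < e) (a b : ℝ) :
    {d ∈ Icc ⌈a⌉ ⌊b⌋ | e ∣ d} =
      (Icc ⌈a / e⌉ ⌊b / e⌋).map ⟨(· * e), mul_left_injective₀ he.ne'⟩ := by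
  have he' : (0 : ℝ) < e := by exact_mod_cast he
  ext d
  simp only [mem_map, mem_filter, mem_Icc, Int.ceil_le, Int.le_floor, le_div_iff₀ he',
    div_le_iff₀ he', Function.Embedding.coeFn_mk, dvd_iff_exists_eq_mul_left]
  constructor
  · rintro ⟨h, k, rfl⟩
    exact ⟨k, by exact_mod_cast h, rfl⟩
  · rintro ⟨k, h, rfl⟩
    exact ⟨by exact_mod_cast h, k, rfl⟩

lemma Int.abs_toNat_sub_le_one {z : ℤ} {t : ℝ} (ht : 0 ≤ t) (hlo : t - 1 < z) (hhi : z ≤ t + 1) :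
    |(z.toNat : ℝ) - t| ≤ 1 := by
  rcases le_total 0 z with hz | hz
  · rw [← Int.cast_natCast, Int.toNat_of_nonneg hz, abs_le]
    constructor <;> linarith
  · rw [Int.toNat_of_nonpos hz, abs_le]
    have : (z : ℝ) ≤ 0 := by exact_mod_cast hz
    push_cast
    constructor <;> linarith

lemma abs_card_Icc_ceil_floor_filter_dvd_sub_le {e : ℤ} (he : 0 < e) {a b : ℝ} (hab : a ≤ b) :
    |(#{d ∈ Icc ⌈a⌉ ⌊b⌋ | e ∣ d} : ℝ) - (b - a) / e| ≤ 1 := by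
  have he' : (0 : ℝ) < e := by exact_mod_cast he
  rw [Int.Icc_ceil_floor_filter_dvd_eq he, card_map, Int.card_Icc]
  have hfloor := Int.sub_one_lt_floor (b / e)
  have hceil := Int.ceil_lt_add_one (a / e)
  have hdiv : (b - a) / e = b / e - a / e := sub_div b a e
  apply Int.abs_toNat_sub_le_one (div_nonneg (by linarith) he'.le) <;> push_cast
  · linarith
  · linarith [Int.floor_le (b / e), Int.le_ceil (a / e)]

lemma sum_divisors_moebius (n : ℕ) : ∑ e ∈ n.divisors, μ e = if n = 1 then 1 else 0 := by
  rw [← coe_mul_zeta_apply, moebius_mul_coe_zeta, one_apply]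

lemma sum_divisors_filter_dvd_moebius {m : ℕ} (hm : m ≠ 0) (d : ℤ) :
    ∑ e ∈ m.divisors with ((e : ℕ) : ℤ) ∣ d, μ e = if Int.gcd d m = 1 then 1 else 0 := by
  have hfilter : {e ∈ m.divisors | ((e : ℕ) : ℤ) ∣ d} = (Int.gcd d m).divisors := by
    rw [show Int.gcd d m = Nat.gcd d.natAbs m from rfl,
      ← Nat.divisors_filter_dvd_of_dvd hm (Nat.gcd_dvd_right ..)]
    refine filter_congr fun e he => ?_
    rw [Nat.dvd_gcd_iff, Int.natCast_dvd]
    simp [Nat.dvd_of_mem_divisors he]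
  rw [hfilter, sum_divisors_moebius]

lemma card_filter_coprime_eq_sum_moebius (S : Finset ℤ) {m : ℕ} (hm : m ≠ 0) :
    (#{d ∈ S | Int.gcd d m = 1} : ℤ) = ∑ e ∈ m.divisors, μ e * #{d ∈ S | (e : ℤ) ∣ d} := by
  calc (#{d ∈ S | Int.gcd d m = 1} : ℤ)
      = ∑ d ∈ S, ∑ e ∈ m.divisors with ((e : ℕ) : ℤ) ∣ d, μ e := by
        simp_rw [sum_divisors_filter_dvd_moebius hm, sum_boole]
    _ = ∑ e ∈ m.divisors, μ e * #{d ∈ S | (e : ℤ) ∣ d} := by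
        simp_rw [sum_filter, sum_comm (s := S), ← sum_filter, sum_const, nsmul_eq_mul, mul_comm]

lemma totient_div_eq_sum_moebius_div {m : ℕ} (hm : 0 < m) :
    (φ m : ℝ) / m = ∑ e ∈ m.divisors, (μ e : ℝ) / e := by
  have hinv := (sum_eq_iff_sum_smul_moebius_eq (R := ℝ) (f := fun n => (φ n : ℝ))
    (g := fun n => (n : ℝ))).mp (fun n _ => by exact_mod_cast Nat.sum_totient n) m hm
  rw [Nat.sum_divisorsAntidiagonal (f := fun x y => μ x • (y : ℝ))] at hinv
  rw [div_eq_iff (by positivity), sum_mul, ← hinv]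
  refine sum_congr rfl fun e he => ?_
  have he0 : (e : ℝ) ≠ 0 := by exact_mod_cast (Nat.pos_of_mem_divisors he).ne'
  rw [zsmul_eq_mul, Nat.cast_div (Nat.dvd_of_mem_divisors he) he0]
  field_simp

lemma abs_card_Icc_ceil_floor_filter_coprime_sub_le {m : ℕ} (hm : 0 < m) {a b : ℝ} (hab : a ≤ b) :
    |(#{d ∈ Icc ⌈a⌉ ⌊b⌋ | Int.gcd d m = 1} : ℝ) - φ m / m * (b - a)|
      ≤ ∑ e ∈ m.divisors, |(μ e : ℝ)| := by
  have hcount : (#{d ∈ Icc ⌈a⌉ ⌊b⌋ | Int.gcd d m = 1} : ℝ)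
      = ∑ e ∈ m.divisors, (μ e : ℝ) * #{d ∈ Icc ⌈a⌉ ⌊b⌋ | (e : ℤ) ∣ d} := by
    exact_mod_cast card_filter_coprime_eq_sum_moebius (Icc ⌈a⌉ ⌊b⌋) hm.ne'
  rw [hcount, totient_div_eq_sum_moebius_div hm, sum_mul, ← sum_sub_distrib]
  refine (abs_sum_le_sum_abs _ _).trans (sum_le_sum fun e he => ?_)
  have he : (0 : ℤ) < e := by exact_mod_cast Nat.pos_of_mem_divisors he
  rw [div_mul_eq_mul_div, mul_div_assoc, ← mul_sub, abs_mul]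
  exact mul_le_of_le_one_right (abs_nonneg _)
    (by exact_mod_cast abs_card_Icc_ceil_floor_filter_dvd_sub_le he hab)

lemma sum_divisors_abs_moebius {m : ℕ} (hm : m ≠ 0) :
    ∑ e ∈ m.divisors, |(μ e : ℝ)| = 2 ^ #m.primeFactors := by
  have h : ∀ e, |(μ e : ℝ)| = if Squarefree e then 1 else 0 := fun e => by
    rw [← Int.cast_abs, abs_moebius]; split_ifs <;> simp
  rw [sum_congr rfl fun e _ => h e, sum_boole, card_eq_sum_ones,
    Nat.sum_divisors_filter_squarefree hm, ← card_eq_sum_ones, card_powerset,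
    Nat.factors_eq, List.toFinset_coe, Nat.toFinset_factors]
  norm_cast

lemma four_pow_card_primeFactors_le {m : ℕ} (hm : m ≠ 0) : 4 ^ #m.primeFactors ≤ 16 * φ m := by
  have hsmall : #{p ∈ m.primeFactors | p ≤ 3} ≤ 2 := by
    refine (card_le_card (t := {2, 3}) fun p hp => ?_).trans card_le_two
    rw [mem_filter] at hp
    have := (Nat.prime_of_mem_primeFactors hp.1).two_le
    simp only [mem_insert, mem_singleton]
    omega
  have hprod : ∏ p ∈ m.primeFactors, (p - 1) ≤ φ m := by
    rw [Nat.totient_eq_div_primeFactors_mul]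
    refine Nat.le_mul_of_pos_left _ (Nat.div_pos (Nat.le_of_dvd (Nat.pos_of_ne_zero hm)
      (Nat.prod_primeFactors_dvd m)) (prod_pos fun p hp => (Nat.prime_of_mem_primeFactors hp).pos))
  calc 4 ^ #m.primeFactors = ∏ p ∈ m.primeFactors, 4 := (prod_const 4).symm
    _ ≤ ∏ p ∈ m.primeFactors, (if p ≤ 3 then 4 else 1) * (p - 1) := by
        refine prod_le_prod' fun p hp => ?_
        have hp := Nat.prime_of_mem_primeFactors hp
        have : p ≠ 4 := by rintro rfl; norm_num at hp
        have := hp.two_le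
        split_ifs <;> omega
    _ = 4 ^ #{p ∈ m.primeFactors | p ≤ 3} * ∏ p ∈ m.primeFactors, (p - 1) := by
        rw [prod_mul_distrib, prod_ite, prod_const, prod_const_one, mul_one]
    _ ≤ 16 * φ m := Nat.mul_le_mul (pow_le_pow_right₀ (by norm_num) hsmall) hprod

lemma two_pow_card_primeFactors_le_four_mul_sqrt_totient {m : ℕ} (hm : m ≠ 0) :
    (2 : ℝ) ^ #m.primeFactors ≤ 4 * √(φ m) := by
  rw [show (4 : ℝ) = √16 by rw [show (16 : ℝ) = 4 ^ 2 by norm_num, Real.sqrt_sq (by norm_num)],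
    ← Real.sqrt_mul (by norm_num), Real.le_sqrt (by positivity) (by positivity), ← pow_mul,
    mul_comm, pow_mul]
  norm_num
  exact_mod_cast four_pow_card_primeFactors_le hm

lemma setOf_dvd_gcd_div_eq_image {l : ℕ} (hl : 0 < l) (m : ℕ) (i j : ℝ) :
    {c : ℤ | i ≤ (c : ℝ) ∧ (c : ℝ) ≤ j ∧ (l : ℤ) ∣ c ∧ Int.gcd (c / (l : ℤ)) m = 1} =
      (fun d => (l : ℤ) * d) '' ↑{d ∈ Icc ⌈i / l⌉ ⌊j / l⌋ | Int.gcd d m = 1} := by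
  have hl' : (0 : ℝ) < l := by exact_mod_cast hl
  have hl0 : (l : ℤ) ≠ 0 := by exact_mod_cast hl.ne'
  ext c
  simp only [Set.mem_ofPred_eq, Set.mem_image, coe_filter, mem_Icc, Int.ceil_le, Int.le_floor,
    div_le_iff₀ hl', le_div_iff₀ hl']
  constructor
  · rintro ⟨hi, hj, ⟨d, rfl⟩, hgcd⟩
    rw [Int.mul_ediv_cancel_left d hl0] at hgcd
    push_cast at hi hj
    exact ⟨d, ⟨⟨by linarith, by linarith⟩, hgcd⟩, rfl⟩
  · rintro ⟨d, ⟨⟨hi, hj⟩, hgcd⟩, rfl⟩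
    rw [Int.mul_ediv_cancel_left d hl0]
    push_cast
    exact ⟨by linarith, by linarith, dvd_mul_right _ _, hgcd⟩

/-- Erdős–Turán-type equidistribution: there is an absolute constant `C` such that for all
positive integers `l ∣ y` and all reals `0 ≤ i ≤ j < y`,
`|#{c ∈ ℤ : i ≤ c ≤ j, l ∣ c, gcd(c/l, y/l) = 1} - (φ(y/l)/y)(j-i)| ≤ C √(φ(y/l))`. -/
theorem stmt_15 :
    ∃ C : ℝ, ∀ y l : ℕ, 0 < y → 0 < l → l ∣ y →
      ∀ i j : ℝ, 0 ≤ i → i ≤ j → j < y →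
        |(Set.ncard {c : ℤ | i ≤ (c : ℝ) ∧ (c : ℝ) ≤ j ∧ (l : ℤ) ∣ c ∧
            Int.gcd (c / (l : ℤ)) ((y / l : ℕ) : ℤ) = 1} : ℝ)
          - ((Nat.totient (y / l) : ℝ) / (y : ℝ)) * (j - i)|
          ≤ C * Real.sqrt (Nat.totient (y / l)) := by
  refine ⟨4, fun y l hy hl hly i j _ hij _ => ?_⟩
  have hm : 0 < y / l := Nat.div_pos (Nat.le_of_dvd hy hly) hl
  have hl' : (0 : ℝ) < l := by exact_mod_cast hl
  have hmain : (φ (y / l) : ℝ) / y * (j - i) = φ (y / l) / (y / l : ℕ) * (j / l - i / l) := by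
    rw [Nat.cast_div hly hl'.ne']
    field_simp
  rw [setOf_dvd_gcd_div_eq_image hl, Set.ncard_image_of_injective _ (mul_right_injective₀
    (by exact_mod_cast hl.ne')), Set.ncard_coe_finset, hmain]
  calc _ ≤ ∑ e ∈ (y / l).divisors, |(μ e : ℝ)| :=
        abs_card_Icc_ceil_floor_filter_coprime_sub_le hm (div_le_div_of_nonneg_right hij hl'.le)
    _ = 2 ^ #(y / l).primeFactors := sum_divisors_abs_moebius hm.ne'
    _ ≤ 4 * √(φ (y / l)) := two_pow_card_primeFactors_le_four_mul_sqrt_totient hm.ne'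
end

section
/- For all ε > 0 and δ > 0 there is a constant C_{ε,δ} such that for every real B ≥ 1 and every integer y with 1 ≤ y ≤ B: Σ F(r) ≤ C_{ε,δ}·B^{1/2+ε+3δ}·y^{9/10}, where the sum is over pairs (r,c) of positive integers with (r+c²)·√|r−c²| ≤ B·y, y² ∣ (r−c²), r ≠ c², and B^{1/2−δ}/y^{3/10} ≤ c ≤ B^{1/2}. -/
open scoped Classical

noncomputable section

/-- `F(n)`: the number of ordered pairs `(u,v)` of positive integers with `u² + v² = n`. -/
def Fcount (n : ℕ) : ℕ :=
  Nat.card {p : ℕ × ℕ // 0 < p.1 ∧ 0 < p.2 ∧ p.1 ^ 2 + p.2 ^ 2 = n}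

/-!
A representation `n = u² + v²` with `gcd(u, v) = g` yields the square root `u / v` of `-1` modulo
`n / g²`, and distinct representations yield distinct roots. Modulo a prime power there are at most
two such roots (`ℤ/pᵏ` is local, and `-1` is not a square modulo `4`), so by the Chinese
remainder theorem there are at most `d(m)` of them modulo `m`, whence `F(n) ≤ d(n)² ≪_ε n^ε`.

All summands have `r + c² ≤ B`, so `F(r) ≪ B^(ε/2)`. For fixed `c`, write `r - c² = y² k` with
`k ≠ 0`: the constraint gives `c² y √|k| ≤ B y`, so at most `2 B² / c⁴` values of `r` occur.
Since `c ≥ c₀ = B^(1/2-δ) / y^(3/10)`, this is at most `2 B² / (c₀³ c)`; summing `1 / c` over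
`c ≤ B` costs another `B^(ε/2)`, and `B² / c₀³ = B^(1/2+3δ) y^(9/10)`.
-/

open Finset

theorem eq_or_eq_neg_of_sq_eq_sq_of_isUnit {R : Type*} [CommRing R] [IsLocalRing R]
    (h2 : IsUnit (2 : R)) {x y : R} (hx : IsUnit x) (h : y ^ 2 = x ^ 2) : y = x ∨ y = -x := by
  have hprod : (x - y) * (x + y) = 0 := by linear_combination -h
  have hsum : IsUnit ((x - y) + (x + y)) := by
    rw [show (x - y) + (x + y) = 2 * x by ring]; exact h2.mul hx
  rcases IsLocalRing.isUnit_or_isUnit_of_isUnit_add hsum with hu | hu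
  · right; linear_combination hu.mul_right_eq_zero.mp hprod
  · left; linear_combination -hu.mul_left_eq_zero.mp hprod

theorem ZMod.isLocalRing_prime_pow {p k : ℕ} (hp : p.Prime) (hk : 0 < k) :
    IsLocalRing (ZMod (p ^ k)) := by
  have : NeZero (p ^ k) := ⟨pow_ne_zero k hp.ne_zero⟩
  have : Nontrivial (ZMod (p ^ k)) :=
    ZMod.nontrivial_iff.mpr (Nat.one_lt_pow hk.ne' hp.one_lt).ne'
  refine .of_nonunits_add fun a b ha hb => ?_
  rw [← ZMod.natCast_zmod_val a, ← ZMod.natCast_zmod_val b] at *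
  simp only [mem_nonunits_iff, ← Nat.cast_add, ZMod.isUnit_natCast_iff_not_dvd_pow hp hk,
    not_not] at *
  exact dvd_add ha hb

theorem card_sq_eq_le_two {R : Type*} [CommRing R] [IsLocalRing R] [Finite R]
    (h2 : IsUnit (2 : R)) {a : R} (ha : IsUnit a) : Nat.card {x : R // x ^ 2 = a} ≤ 2 := by
  rcases isEmpty_or_nonempty {x : R // x ^ 2 = a} with h | ⟨x₀, hx₀⟩
  · simp
  have hx₀u : IsUnit x₀ := (isUnit_pow_iff two_ne_zero).mp (hx₀ ▸ ha)
  calc Nat.card {x : R // x ^ 2 = a} = Set.ncard {x : R | x ^ 2 = a} := Nat.card_coe_set_eq _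
    _ ≤ Set.ncard ({x₀, -x₀} : Set R) := Set.ncard_le_ncard fun y hy =>
        eq_or_eq_neg_of_sq_eq_sq_of_isUnit h2 hx₀u (hy.trans hx₀.symm)
    _ ≤ 2 := (Set.ncard_insert_le _ _).trans (by simp)

def numSqrtNegOne (m : ℕ) : ℕ := Nat.card {x : ZMod m // x ^ 2 = -1}

theorem numSqrtNegOne_mul {a b : ℕ} (h : a.Coprime b) :
    numSqrtNegOne (a * b) = numSqrtNegOne a * numSqrtNegOne b := by
  let e := ZMod.chineseRemainder h
  have hsq : ∀ x : ZMod (a * b), x ^ 2 = -1 ↔ e x ^ 2 = -1 := fun x => by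
    rw [← map_pow, ← map_one e, ← map_neg, e.injective.eq_iff]
  have hprod : ∀ y : ZMod a × ZMod b, y ^ 2 = -1 ↔ y.1 ^ 2 = -1 ∧ y.2 ^ 2 = -1 := fun y =>
    Prod.ext_iff
  rw [numSqrtNegOne, Nat.card_congr ((e.toEquiv.subtypeEquiv hsq).trans
    ((Equiv.subtypeEquivRight hprod).trans (Equiv.subtypeProdEquivProd
      (p := fun u : ZMod a => u ^ 2 = -1) (q := fun v : ZMod b => v ^ 2 = -1)))), Nat.card_prod]
  rfl

theorem numSqrtNegOne_two_pow {k : ℕ} (hk : 2 ≤ k) : numSqrtNegOne (2 ^ k) = 0 := by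
  have h4 : 4 ∣ 2 ^ k := (pow_dvd_pow 2 hk : 2 ^ 2 ∣ 2 ^ k)
  have hmod4 : ∀ z : ZMod 4, z ^ 2 ≠ -1 := by decide
  refine Nat.card_eq_zero.mpr (Or.inl ⟨fun ⟨x, hx⟩ => hmod4 (ZMod.castHom h4 (ZMod 4) x) ?_⟩)
  rw [← map_pow, hx, map_neg, map_one]

theorem numSqrtNegOne_prime_pow_le_two {p k : ℕ} (hp : p.Prime) (hk : 0 < k) :
    numSqrtNegOne (p ^ k) ≤ 2 := by
  have : NeZero (p ^ k) := ⟨pow_ne_zero k hp.ne_zero⟩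
  obtain rfl | hp2 := eq_or_ne p 2
  · rcases Nat.lt_or_ge k 2 with hk2 | hk2
    · obtain rfl : k = 1 := by omega
      exact (Finite.card_subtype_le _).trans (by simp)
    · simp [numSqrtNegOne_two_pow hk2]
  · have := ZMod.isLocalRing_prime_pow hp hk
    have h2 : IsUnit (2 : ZMod (p ^ k)) := by
      have := (ZMod.isUnit_natCast_iff_not_dvd_pow (a := 2) hp hk).mpr
        fun h => hp2 ((Nat.prime_dvd_prime_iff_eq hp Nat.prime_two).mp h)
      simpa using this
    exact card_sq_eq_le_two h2 isUnit_one.neg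

theorem numSqrtNegOne_le_card_divisors {m : ℕ} (hm : m ≠ 0) :
    numSqrtNegOne m ≤ #m.divisors := by
  induction m using Nat.recOnPosPrimePosCoprime with
  | zero => exact absurd rfl hm
  | one => exact (Finite.card_subtype_le _).trans (by simp)
  | prime_pow p k hp hk =>
    rw [Nat.divisors_prime_pow hp, card_map, card_range]
    exact (numSqrtNegOne_prime_pow_le_two hp hk).trans (by omega)
  | coprime a b ha hb hab iha ihb =>
    rw [numSqrtNegOne_mul hab, Nat.Coprime.card_divisors_mul hab]
    exact Nat.mul_le_mul (iha (by omega)) (ihb (by omega))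

theorem add_one_le_pow_of_two_le {t : ℝ} (ht : 2 ≤ t) (a : ℕ) : (a + 1 : ℝ) ≤ t ^ a :=
  calc (a + 1 : ℝ) = 1 + a * 1 := by ring
    _ ≤ (1 + 1) ^ a := one_add_mul_le_pow (by norm_num) a
    _ ≤ t ^ a := pow_le_pow_left₀ (by norm_num) (by linarith) a

theorem add_one_le_mul_pow {s t : ℝ} (hs : 1 < s) (hst : s ≤ t) (a : ℕ) :
    (a + 1 : ℝ) ≤ (1 + (s - 1)⁻¹) * t ^ a := by
  have hd : 0 < s - 1 := by linarith
  have hbern : 1 + a * (s - 1) ≤ t ^ a :=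
    calc 1 + a * (s - 1) ≤ (1 + (s - 1)) ^ a := one_add_mul_le_pow (by linarith) a
      _ ≤ t ^ a := pow_le_pow_left₀ (by linarith) (by linarith) a
  have hexpand : (1 + (s - 1)⁻¹) * (1 + a * (s - 1)) = a + 1 + (a * (s - 1) + (s - 1)⁻¹) := by
    field_simp
    ring
  calc (a + 1 : ℝ) ≤ (1 + (s - 1)⁻¹) * (1 + a * (s - 1)) := by
        rw [hexpand]; have := hd.le; exact le_add_of_nonneg_right (by positivity)
    _ ≤ (1 + (s - 1)⁻¹) * t ^ a := mul_le_mul_of_nonneg_left hbern (by positivity)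

theorem exists_card_divisors_le_rpow {ε : ℝ} (hε : 0 < ε) :
    ∃ C : ℝ, ∀ n : ℕ, n ≠ 0 → (#n.divisors : ℝ) ≤ C * (n : ℝ) ^ ε := by
  set s : ℝ := 2 ^ ε
  have hs : 1 < s := Real.one_lt_rpow (by norm_num) hε
  set K : ℝ := 1 + (s - 1)⁻¹
  have hK : 1 ≤ K := le_add_of_nonneg_right (inv_nonneg.mpr (by linarith))
  -- primes `p ≥ P` satisfy `p ^ ε ≥ 2`, so only the primes below `P` cost a factor `K`
  set P : ℕ := ⌈(2 : ℝ) ^ ε⁻¹⌉₊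
  refine ⟨K ^ P, fun n hn => ?_⟩
  have hlocal : ∀ p ∈ n.primeFactors, ((n.factorization p + 1 : ℕ) : ℝ) ≤
      (if p < P then K else 1) * ((p : ℝ) ^ ε) ^ n.factorization p := by
    intro p hp
    have hp2 : (2 : ℝ) ≤ p := by exact_mod_cast (Nat.prime_of_mem_primeFactors hp).two_le
    push_cast
    split_ifs with hpP
    · exact add_one_le_mul_pow hs (Real.rpow_le_rpow (by norm_num) hp2 hε.le) _
    · rw [one_mul]
      refine add_one_le_pow_of_two_le ?_ _
      calc (2 : ℝ) = ((2 : ℝ) ^ ε⁻¹) ^ ε := by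
            rw [← Real.rpow_mul (by norm_num), inv_mul_cancel₀ hε.ne', Real.rpow_one]
        _ ≤ (p : ℝ) ^ ε := Real.rpow_le_rpow (by positivity)
            ((Nat.le_ceil _).trans (by exact_mod_cast not_lt.mp hpP)) hε.le
  have hK_prod : ∏ p ∈ n.primeFactors, (if p < P then K else 1) ≤ K ^ P := by
    rw [prod_ite, prod_const, prod_const_one, mul_one]
    refine pow_le_pow_right₀ hK ((card_le_card fun p hp => ?_).trans (card_range P).le)
    exact mem_range.mpr (mem_filter.mp hp).2
  have hn_prod : ∏ p ∈ n.primeFactors, ((p : ℝ) ^ ε) ^ n.factorization p = (n : ℝ) ^ ε := by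
    simp_rw [Real.rpow_pow_comm (Nat.cast_nonneg _)]
    rw [Real.finsetProd_rpow _ _ fun p _ => by positivity]
    congr 1
    exact_mod_cast (Nat.prod_primeFactors_pow_factorization hn).symm
  calc (#n.divisors : ℝ) = ∏ p ∈ n.primeFactors, ((n.factorization p + 1 : ℕ) : ℝ) := by
        rw [Nat.card_divisors hn]; push_cast; rfl
    _ ≤ ∏ p ∈ n.primeFactors, (if p < P then K else 1) * ((p : ℝ) ^ ε) ^ n.factorization p :=
        prod_le_prod (fun _ _ => by positivity) hlocal
    _ ≤ K ^ P * (n : ℝ) ^ ε := by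
        rw [prod_mul_distrib, hn_prod]
        exact mul_le_mul_of_nonneg_right hK_prod (by positivity)

def sqAddSqReps (n : ℕ) : Finset (ℕ × ℕ) :=
  (Icc 1 n ×ˢ Icc 1 n).filter fun p => p.1 ^ 2 + p.2 ^ 2 = n

theorem mem_sqAddSqReps {n : ℕ} {p : ℕ × ℕ} :
    p ∈ sqAddSqReps n ↔ 0 < p.1 ∧ 0 < p.2 ∧ p.1 ^ 2 + p.2 ^ 2 = n := by
  simp only [sqAddSqReps, mem_filter, mem_product, mem_Icc]
  constructor
  · rintro ⟨⟨⟨h1, -⟩, h2, -⟩, h⟩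
    exact ⟨h1, h2, h⟩
  · rintro ⟨h1, h2, h⟩
    have := Nat.le_self_pow two_ne_zero p.1
    have := Nat.le_self_pow two_ne_zero p.2
    exact ⟨⟨⟨h1, by omega⟩, h2, by omega⟩, h⟩

theorem Fcount_eq_card_sqAddSqReps (n : ℕ) : Fcount n = #(sqAddSqReps n) := by
  rw [Fcount, ← Nat.card_eq_finsetCard]
  exact Nat.card_congr (Equiv.subtypeEquivRight fun _ => mem_sqAddSqReps.symm)

theorem Nat.Coprime.coprime_sq_add_sq {u v : ℕ} (hco : u.Coprime v) :
    v.Coprime (u ^ 2 + v ^ 2) := by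
  rw [sq v, Nat.coprime_add_mul_right_right]
  exact hco.symm.pow_right 2

theorem sq_mul_inv_eq_neg_one_of_sq_add_sq {m u v : ℕ} (hco : u.Coprime v)
    (h : u ^ 2 + v ^ 2 = m) : ((u : ZMod m) * (v : ZMod m)⁻¹) ^ 2 = -1 := by
  have hvv : (v : ZMod m) * (v : ZMod m)⁻¹ = 1 :=
    ZMod.coe_mul_inv_eq_one v (h ▸ hco.coprime_sq_add_sq)
  have hm : (u : ZMod m) ^ 2 + (v : ZMod m) ^ 2 = 0 := by
    exact_mod_cast (ZMod.natCast_self m ▸ congrArg (Nat.cast : ℕ → ZMod m) h)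
  linear_combination (v : ZMod m)⁻¹ ^ 2 * hm - (1 + (v : ZMod m) * (v : ZMod m)⁻¹) * hvv

theorem eq_of_sq_add_sq_of_mul_inv_eq {m u v u' v' : ℕ} (hu : 0 < u) (hv : 0 < v) (hu' : 0 < u')
    (hv' : 0 < v') (hco : u.Coprime v) (hco' : u'.Coprime v')
    (h : u ^ 2 + v ^ 2 = m) (h' : u' ^ 2 + v' ^ 2 = m)
    (heq : (u : ZMod m) * (v : ZMod m)⁻¹ = (u' : ZMod m) * (v' : ZMod m)⁻¹) :
    u = u' ∧ v = v' := by
  have hvv : (v : ZMod m) * (v : ZMod m)⁻¹ = 1 :=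
    ZMod.coe_mul_inv_eq_one v (h ▸ hco.coprime_sq_add_sq)
  have hvv' : (v' : ZMod m) * (v' : ZMod m)⁻¹ = 1 :=
    ZMod.coe_mul_inv_eq_one v' (h' ▸ hco'.coprime_sq_add_sq)
  have hcross : ((u * v' : ℕ) : ZMod m) = ((u' * v : ℕ) : ZMod m) := by
    push_cast
    linear_combination (v : ZMod m) * v' * heq - u * v' * hvv + u' * v * hvv'
  -- both cross products are below `m`, as `2 u v' ≤ u² + v'² < 2 m`
  have hlt : u * v' < m := by nlinarith
  have hlt' : u' * v < m := by nlinarith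
  rw [ZMod.natCast_eq_natCast_iff', Nat.mod_eq_of_lt hlt, Nat.mod_eq_of_lt hlt'] at hcross
  have hmsq : m * v' ^ 2 = m * v ^ 2 :=
    calc m * v' ^ 2 = (u * v') ^ 2 + v ^ 2 * v' ^ 2 := by rw [← h]; ring
      _ = (u' * v) ^ 2 + v ^ 2 * v' ^ 2 := by rw [hcross]
      _ = m * v ^ 2 := by rw [← h']; ring
  obtain rfl : v = v' :=
    (Nat.pow_left_injective two_ne_zero (Nat.eq_of_mul_eq_mul_left (by omega) hmsq)).symm
  exact ⟨Nat.eq_of_mul_eq_mul_right hv hcross, rfl⟩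

theorem card_filter_coprime_sqAddSqReps_le_card_divisors (m : ℕ) :
    #((sqAddSqReps m).filter fun p => p.1.Coprime p.2) ≤ #m.divisors := by
  rcases eq_or_ne m 0 with rfl | hm
  · simp [sqAddSqReps]
  have : NeZero m := ⟨hm⟩
  refine le_trans ?_ (numSqrtNegOne_le_card_divisors hm)
  rw [numSqrtNegOne, ← Nat.card_eq_finsetCard]
  refine Nat.card_le_card_of_injective
    (fun p => ⟨(p.1.1 : ZMod m) * (p.1.2 : ZMod m)⁻¹, ?_⟩) fun p q hpq => ?_
  · obtain ⟨hp, hco⟩ := mem_filter.mp p.2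
    exact sq_mul_inv_eq_neg_one_of_sq_add_sq hco (mem_sqAddSqReps.mp hp).2.2
  · obtain ⟨hp, hco⟩ := mem_filter.mp p.2
    obtain ⟨hq, hco'⟩ := mem_filter.mp q.2
    obtain ⟨hu, hv, h⟩ := mem_sqAddSqReps.mp hp
    obtain ⟨hu', hv', h'⟩ := mem_sqAddSqReps.mp hq
    obtain ⟨h1, h2⟩ :=
      eq_of_sq_add_sq_of_mul_inv_eq hu hv hu' hv' hco hco' h h' (Subtype.ext_iff.mp hpq)
    exact Subtype.ext (Prod.ext h1 h2)

theorem gcd_sq_dvd_of_mem_sqAddSqReps {n : ℕ} {p : ℕ × ℕ} (hp : p ∈ sqAddSqReps n) :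
    p.1.gcd p.2 ^ 2 ∣ n := by
  rw [← (mem_sqAddSqReps.mp hp).2.2]
  exact dvd_add (pow_dvd_pow_of_dvd (Nat.gcd_dvd_left _ _) 2)
    (pow_dvd_pow_of_dvd (Nat.gcd_dvd_right _ _) 2)

theorem card_filter_gcd_eq_le (n g : ℕ) :
    #((sqAddSqReps n).filter fun p => p.1.gcd p.2 = g) ≤
      #((sqAddSqReps (n / g ^ 2)).filter fun p => p.1.Coprime p.2) := by
  refine card_le_card_of_injOn (fun p => (p.1 / g, p.2 / g)) (fun p hp => ?_)
    fun p hp q hq hpq => ?_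
  · obtain ⟨a, b⟩ := p
    obtain ⟨hmem, rfl⟩ := mem_filter.mp hp
    obtain ⟨ha, hb, rfl⟩ := mem_sqAddSqReps.mp hmem
    obtain ⟨g, u, v, hg, hco, rfl, rfl⟩ := Nat.exists_coprime' (Nat.gcd_pos_of_pos_left b ha)
    have hn : (u * g) ^ 2 + (v * g) ^ 2 = (u ^ 2 + v ^ 2) * g ^ 2 := by ring
    simp only [Nat.gcd_mul_right, hco.gcd_eq_one, one_mul, Nat.mul_div_cancel _ hg, hn,
      Nat.mul_div_cancel _ (pow_pos hg 2), coe_filter]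
    exact ⟨mem_sqAddSqReps.mpr
      ⟨Nat.pos_of_mul_pos_right ha, Nat.pos_of_mul_pos_right hb, rfl⟩, hco⟩
  · obtain ⟨-, rfl⟩ := mem_filter.mp hp
    obtain ⟨-, hgq⟩ := mem_filter.mp hq
    obtain ⟨h1, h2⟩ := Prod.ext_iff.mp hpq
    refine Prod.ext ((Nat.div_left_inj (Nat.gcd_dvd_left _ _) ?_).mp h1)
      ((Nat.div_left_inj (Nat.gcd_dvd_right _ _) ?_).mp h2)
    · exact hgq ▸ Nat.gcd_dvd_left _ _
    · exact hgq ▸ Nat.gcd_dvd_right _ _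

theorem Fcount_le_card_divisors_sq (n : ℕ) : Fcount n ≤ #n.divisors ^ 2 := by
  rcases eq_or_ne n 0 with rfl | hn
  · simp [Fcount_eq_card_sqAddSqReps, sqAddSqReps]
  rw [Fcount_eq_card_sqAddSqReps, sq]
  refine card_le_mul_card_image_of_maps_to (f := fun p => p.1.gcd p.2) (fun p hp => ?_) _
    fun g _ => ?_
  · exact Nat.mem_divisors.mpr
      ⟨(dvd_pow_self _ two_ne_zero).trans (gcd_sq_dvd_of_mem_sqAddSqReps hp), hn⟩
  by_cases hg : g ^ 2 ∣ n
  · exact (card_filter_gcd_eq_le n g).trans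
      ((card_filter_coprime_sqAddSqReps_le_card_divisors _).trans
        (card_le_card (Nat.divisors_subset_of_dvd hn (Nat.div_dvd_of_dvd hg))))
  · rw [card_eq_zero.mpr (filter_eq_empty_iff.mpr fun p hp (hpg : p.1.gcd p.2 = g) =>
      hg (hpg ▸ gcd_sq_dvd_of_mem_sqAddSqReps hp))]
    exact Nat.zero_le _

theorem exists_Fcount_le_rpow {ε : ℝ} (hε : 0 < ε) :
    ∃ C : ℝ, 0 ≤ C ∧ ∀ n : ℕ, n ≠ 0 → (Fcount n : ℝ) ≤ C * (n : ℝ) ^ ε := by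
  obtain ⟨C, hd⟩ := exists_card_divisors_le_rpow (half_pos hε)
  refine ⟨C ^ 2, sq_nonneg C, fun n hn => ?_⟩
  calc (Fcount n : ℝ) ≤ (#n.divisors : ℝ) ^ 2 := by exact_mod_cast Fcount_le_card_divisors_sq n
    _ ≤ (C * (n : ℝ) ^ (ε / 2)) ^ 2 := pow_le_pow_left₀ (by positivity) (hd n hn) 2
    _ = C ^ 2 * (n : ℝ) ^ ε := by
      rw [mul_pow, ← Real.rpow_natCast ((n : ℝ) ^ (ε / 2)), ← Real.rpow_mul (Nat.cast_nonneg n)]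
      norm_num

theorem card_le_two_mul_of_injOn_int {α : Type*} {s : Finset α} {f : α → ℤ} {M : ℝ}
    (hM : 0 ≤ M) (hf : ∀ a ∈ s, f a ≠ 0 ∧ |(f a : ℝ)| ≤ M) (hinj : Set.InjOn f s) :
    (#s : ℝ) ≤ 2 * M := by
  set K := ⌊M⌋₊
  have hmaps : ∀ a ∈ s, f a ∈ (Icc (-(K : ℤ)) K).erase 0 := fun a ha => by
    have hK : (f a).natAbs ≤ K := Nat.le_floor (by rw [Nat.cast_natAbs]; exact_mod_cast (hf a ha).2)
    have := (hf a ha).1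
    simp only [mem_erase, mem_Icc]
    omega
  have hcard : #((Icc (-(K : ℤ)) K).erase 0) = 2 * K := by
    rw [card_erase_of_mem (by simp), Int.card_Icc]
    omega
  calc (#s : ℝ) ≤ 2 * K := by exact_mod_cast (card_le_card_of_injOn f hmaps hinj).trans hcard.le
    _ ≤ 2 * M := by gcongr; exact Nat.floor_le hM

theorem le_sqrt_abs_of_sq_dvd {a : ℤ} {y : ℕ} (ha : a ≠ 0) (h : (y : ℤ) ^ 2 ∣ a) :
    (y : ℝ) ≤ √|(a : ℝ)| := by
  rw [Real.le_sqrt (Nat.cast_nonneg y) (abs_nonneg _)]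
  exact_mod_cast Int.le_of_dvd (abs_pos.mpr ha) ((dvd_abs _ _).mpr h)

theorem le_floor_of_mul_sqrt_abs_le {X : ℝ} {y r c : ℕ} (hy : 0 < y)
    (h : ((r : ℝ) + (c : ℝ) ^ 2) * √|(r : ℝ) - (c : ℝ) ^ 2| ≤ X * y)
    (hdvd : (y : ℤ) ^ 2 ∣ (r : ℤ) - (c : ℤ) ^ 2) (hne : (r : ℤ) ≠ (c : ℤ) ^ 2) :
    r ≤ ⌊X⌋₊ ∧ c ≤ ⌊X⌋₊ := by
  have hy' : (y : ℝ) ≤ √|(r : ℝ) - (c : ℝ) ^ 2| := by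
    exact_mod_cast le_sqrt_abs_of_sq_dvd (sub_ne_zero.mpr hne) hdvd
  have hX : (r : ℝ) + (c : ℝ) ^ 2 ≤ X := by
    refine le_of_mul_le_mul_right ?_ (Nat.cast_pos.mpr hy : (0 : ℝ) < y)
    exact (mul_le_mul_of_nonneg_left hy' (by positivity)).trans h
  have hc : (c : ℝ) ≤ (c : ℝ) ^ 2 := by exact_mod_cast Nat.le_self_pow two_ne_zero c
  exact ⟨Nat.le_floor (by nlinarith), Nat.le_floor (by nlinarith)⟩

theorem card_filter_mul_sqrt_le (X : ℝ) {y c : ℕ} (hy : 0 < y) (hc : 0 < c) (s : Finset ℕ) :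
    (#(s.filter fun r : ℕ => ((r : ℝ) + (c : ℝ) ^ 2) * √|(r : ℝ) - (c : ℝ) ^ 2| ≤ X * y ∧
      (y : ℤ) ^ 2 ∣ (r : ℤ) - (c : ℤ) ^ 2 ∧ (r : ℤ) ≠ (c : ℤ) ^ 2) : ℝ) ≤ 2 * (X ^ 2 / c ^ 4) := by
  have hy2 : (y : ℤ) ^ 2 ≠ 0 := by positivity
  refine card_le_two_mul_of_injOn_int (f := fun r : ℕ => ((r : ℤ) - (c : ℤ) ^ 2) / (y : ℤ) ^ 2)
    (by positivity) (fun r hr => ?_) fun r hr r' hr' h => ?_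
  · obtain ⟨-, hX, ⟨k, hk⟩, hne⟩ := mem_filter.mp hr
    simp only [hk, Int.mul_ediv_cancel_left _ hy2]
    refine ⟨by rintro rfl; exact hne (by simpa [sub_eq_zero] using hk), ?_⟩
    have hrc : |(r : ℝ) - (c : ℝ) ^ 2| = (y : ℝ) ^ 2 * |(k : ℝ)| := by
      rw [← abs_of_nonneg (by positivity : (0 : ℝ) ≤ (y : ℝ) ^ 2), ← abs_mul]
      exact_mod_cast congrArg (fun z : ℤ => |(z : ℝ)|) hk
    rw [hrc, Real.sqrt_mul (by positivity), Real.sqrt_sq (by positivity)] at hX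
    have hcX : (c : ℝ) ^ 2 * √|(k : ℝ)| ≤ X := by
      refine le_of_mul_le_mul_right ?_ (Nat.cast_pos.mpr hy : (0 : ℝ) < y)
      refine le_trans ?_ hX
      have := mul_nonneg (mul_nonneg (Nat.cast_nonneg r : (0 : ℝ) ≤ r) (Nat.cast_nonneg y))
        (Real.sqrt_nonneg |(k : ℝ)|)
      nlinarith
    rw [le_div_iff₀ (by positivity)]
    calc |(k : ℝ)| * (c : ℝ) ^ 4 = ((c : ℝ) ^ 2 * √|(k : ℝ)|) ^ 2 := by
          rw [mul_pow, Real.sq_sqrt (abs_nonneg _)]; ring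
      _ ≤ X ^ 2 := pow_le_pow_left₀ (by positivity) hcX 2
  · obtain ⟨-, -, ⟨k, hk⟩, -⟩ := mem_filter.mp hr
    obtain ⟨-, -, ⟨k', hk'⟩, -⟩ := mem_filter.mp hr'
    simp only [hk, hk', Int.mul_ediv_cancel_left _ hy2] at h
    subst h
    exact_mod_cast sub_left_injective (hk.trans hk'.symm)

theorem card_filter_le_mul_harmonic {X c₀ : ℝ} (hc₀ : 0 < c₀) {y : ℕ} (hy : 0 < y) (N : ℕ)
    {Q : ℕ × ℕ → Prop} [DecidablePred Q]
    (hQ : ∀ r c, Q (r, c) → ((r : ℝ) + (c : ℝ) ^ 2) * √|(r : ℝ) - (c : ℝ) ^ 2| ≤ X * y ∧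
      (y : ℤ) ^ 2 ∣ (r : ℤ) - (c : ℤ) ^ 2 ∧ (r : ℤ) ≠ (c : ℤ) ^ 2 ∧ c₀ ≤ c) :
    (#((range (N + 1) ×ˢ range (N + 1)).filter Q) : ℝ) ≤ 2 * X ^ 2 / c₀ ^ 3 * harmonic N := by
  rw [card_eq_sum_ones, sum_filter, sum_product_right]
  simp_rw [← sum_filter, ← card_eq_sum_ones]
  push_cast
  calc _ ≤ ∑ c ∈ range (N + 1), 2 * X ^ 2 / c₀ ^ 3 * (c : ℝ)⁻¹ := sum_le_sum fun c _ => ?_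
    _ = 2 * X ^ 2 / c₀ ^ 3 * harmonic N := by
      rw [← mul_sum, sum_range_succ', harmonic]
      push_cast
      simp
  by_cases hc : c₀ ≤ c
  · have hc' : 0 < c := by exact_mod_cast hc₀.trans_le hc
    calc _ ≤ (#((range (N + 1)).filter fun r : ℕ =>
            ((r : ℝ) + (c : ℝ) ^ 2) * √|(r : ℝ) - (c : ℝ) ^ 2| ≤ X * y ∧
            (y : ℤ) ^ 2 ∣ (r : ℤ) - (c : ℤ) ^ 2 ∧ (r : ℤ) ≠ (c : ℤ) ^ 2) : ℝ) :=
          Nat.cast_le.mpr (card_le_card (monotone_filter_right _ fun r _ h =>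
            ⟨(hQ r c h).1, (hQ r c h).2.1, (hQ r c h).2.2.1⟩))
      _ ≤ 2 * (X ^ 2 / c ^ 4) := card_filter_mul_sqrt_le X hy hc' _
      _ ≤ 2 * (X ^ 2 / (c₀ ^ 3 * c)) := by
        gcongr
        rw [pow_succ]
        exact mul_le_mul_of_nonneg_right (pow_le_pow_left₀ hc₀.le hc 3) (Nat.cast_nonneg c)
      _ = 2 * X ^ 2 / c₀ ^ 3 * (c : ℝ)⁻¹ := by ring
  · rw [filter_false_of_mem fun r _ h => hc (hQ r c h).2.2.2, card_empty, Nat.cast_zero]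
    positivity

theorem harmonic_floor_le_rpow {B ε : ℝ} (hB : 1 ≤ B) (hε : 0 < ε) :
    (harmonic ⌊B⌋₊ : ℝ) ≤ (1 + ε⁻¹) * B ^ ε := by
  have hN : (1 : ℝ) ≤ ⌊B⌋₊ := by exact_mod_cast Nat.one_le_floor_iff _ |>.mpr hB
  have hBε : 1 ≤ B ^ ε := Real.one_le_rpow hB hε.le
  calc (harmonic ⌊B⌋₊ : ℝ) ≤ 1 + Real.log ⌊B⌋₊ := harmonic_le_one_add_log _
    _ ≤ 1 + B ^ ε / ε := by
      gcongr
      exact (Real.log_le_log (by linarith) (Nat.floor_le (by linarith))).trans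
        (Real.log_le_rpow_div (by linarith) hε)
    _ ≤ (1 + ε⁻¹) * B ^ ε := by
      rw [add_mul, one_mul, div_eq_inv_mul]
      linarith

theorem tsum_ite_le_mul_card {α : Type*} {P : α → Prop} [DecidablePred P] {f : α → ℝ} {A : ℝ}
    (s : Finset α) (hs : ∀ a, P a → a ∈ s) (hf : ∀ a, P a → f a ≤ A) :
    ∑' a, (if P a then f a else 0) ≤ A * #(s.filter P) := by
  rw [tsum_eq_sum fun a ha => if_neg (mt (hs a) ha), ← sum_filter, mul_comm, ← nsmul_eq_mul]
  exact sum_le_card_nsmul _ _ _ fun a ha => hf a (mem_filter.mp ha).2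

theorem sq_div_rpow_div_rpow_pow_three {B y : ℝ} (hB : 0 < B) (hy : 0 < y) (a b : ℝ) :
    B ^ 2 / (B ^ a / y ^ b) ^ 3 = B ^ (2 - 3 * a) * y ^ (3 * b) := by
  rw [Real.rpow_sub hB, Real.rpow_two, mul_comm 3 a, Real.rpow_mul hB.le, mul_comm 3 b,
    Real.rpow_mul hy.le, Real.rpow_ofNat, Real.rpow_ofNat]
  have : 0 < B ^ a := Real.rpow_pos_of_pos hB a
  have : 0 < y ^ b := Real.rpow_pos_of_pos hy b
  field_simp

/-- For all `ε, δ > 0` there is `C` such that for every `B ≥ 1` and integer `1 ≤ y ≤ B`,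
`Σ F(r) ≤ C B^(1/2+ε+3δ) y^(9/10)`, the sum being over pairs `(r,c)` of positive integers with
`(r+c²)√|r-c²| ≤ B y`, `y² ∣ r-c²`, `r ≠ c²` and `B^(1/2-δ)/y^(3/10) ≤ c ≤ B^(1/2)`. -/
theorem stmt_16 :
    ∀ ε δ : ℝ, 0 < ε → 0 < δ → ∃ C : ℝ, ∀ B : ℝ, 1 ≤ B → ∀ y : ℕ, 1 ≤ y → (y : ℝ) ≤ B →
      (∑' rc : ℕ × ℕ,
          if 0 < rc.1 ∧ 0 < rc.2 ∧
              ((rc.1 : ℝ) + (rc.2 : ℝ) ^ 2) * Real.sqrt |(rc.1 : ℝ) - (rc.2 : ℝ) ^ 2|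
                ≤ B * (y : ℝ) ∧
              ((y : ℤ)) ^ 2 ∣ ((rc.1 : ℤ) - (rc.2 : ℤ) ^ 2) ∧ (rc.1 : ℤ) ≠ (rc.2 : ℤ) ^ 2 ∧
              B ^ ((1 : ℝ) / 2 - δ) / (y : ℝ) ^ ((3 : ℝ) / 10) ≤ (rc.2 : ℝ) ∧
              (rc.2 : ℝ) ≤ B ^ ((1 : ℝ) / 2)
            then (Fcount rc.1 : ℝ) else 0)
        ≤ C * B ^ ((1 : ℝ) / 2 + ε + 3 * δ) * (y : ℝ) ^ ((9 : ℝ) / 10) := by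
  intro ε δ hε _
  obtain ⟨C, hC, hF⟩ := exists_Fcount_le_rpow (half_pos hε)
  refine ⟨2 * C * (1 + (ε / 2)⁻¹), fun B hB y hy _ => ?_⟩
  have hB0 : 0 < B := by linarith
  have hy0 : (0 : ℝ) < y := by exact_mod_cast hy
  set c₀ := B ^ ((1 : ℝ) / 2 - δ) / (y : ℝ) ^ ((3 : ℝ) / 10)
  have hBexp : B ^ (ε / 2) * B ^ (ε / 2) * B ^ (2 - 3 * ((1 : ℝ) / 2 - δ)) =
      B ^ ((1 : ℝ) / 2 + ε + 3 * δ) := by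
    rw [← Real.rpow_add hB0, ← Real.rpow_add hB0]
    ring_nf
  calc _ ≤ C * B ^ (ε / 2) * #((range (⌊B⌋₊ + 1) ×ˢ range (⌊B⌋₊ + 1)).filter _) :=
        tsum_ite_le_mul_card _ (fun rc ⟨_, _, h, hdvd, hne, _⟩ => by
          simpa [Nat.lt_succ_iff] using le_floor_of_mul_sqrt_abs_le hy h hdvd hne)
          fun rc ⟨hr, _, h, hdvd, hne, _⟩ => (hF _ hr.ne').trans (by
            gcongr
            exact (Nat.le_floor_iff hB0.le).mp (le_floor_of_mul_sqrt_abs_le hy h hdvd hne).1)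
    _ ≤ C * B ^ (ε / 2) * (2 * B ^ 2 / c₀ ^ 3 * ((1 + (ε / 2)⁻¹) * B ^ (ε / 2))) := by
        gcongr ?_ * ?_
        refine (card_filter_le_mul_harmonic (by positivity) hy _
          fun r c ⟨_, _, h, hdvd, hne, hc, _⟩ => ⟨h, hdvd, hne, hc⟩).trans ?_
        gcongr
        exact harmonic_floor_le_rpow hB (half_pos hε)
    _ = 2 * C * (1 + (ε / 2)⁻¹) * B ^ ((1 : ℝ) / 2 + ε + 3 * δ) * (y : ℝ) ^ ((9 : ℝ) / 10) := by
        rw [mul_div_assoc, (sq_div_rpow_div_rpow_pow_three hB0 hy0 _ _ : B ^ 2 / c₀ ^ 3 = _),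
          show (3 : ℝ) * (3 / 10) = 9 / 10 by norm_num, ← hBexp]
        ring

end
end
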